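/- arXiv:1011.4748 — 3 statements merged into one kernel-verified Lean document; each statement's English description precedes it below -/
import Mathlib

section
/- Let (Ω, F, P) be a probability space and let X_1, …, X_n be real-valued random variables on Ω with values in [0,1] such that for every 1 ≤ t ≤ n the conditional expectation of X_t given the σ-algebra generated by X_1, …, X_{t−1} equals μ almost surely. Let S_n = X_1 + … + X_n. Then for every a ≥ 0, P(S_n ≥ n·μ + a) ≤ exp(−2a²/n). -/
/-!
Chernoff's method: by Markov's inequality it suffices to bound `E[exp (λ Sₙ)]`. Conditioning on
the past peels the factors `exp (λ X_t)` off one at a time, and each conditional factor is at most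
`exp (λ μ + λ² / 8)`: by convexity `exp (λ x) ≤ 1 + (exp λ - 1) x` on `[0, 1]`, and
`1 - μ + μ exp λ ≤ exp (λ μ + λ² / 8)` is Hoeffding's lemma for a Bernoulli variable.
Optimising, `λ = 4 a / n`.
-/

open MeasureTheory ProbabilityTheory Real Set

lemma exp_mul_le_one_add_mul {x : ℝ} (hx : x ∈ Icc (0 : ℝ) 1) (l : ℝ) :
    exp (l * x) ≤ 1 + (exp l - 1) * x := by
  have h := convexOn_exp.2 (mem_univ 0) (mem_univ l) (sub_nonneg.2 hx.2) hx.1 (sub_add_cancel 1 x)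
  simp only [smul_eq_mul, mul_zero, zero_add, exp_zero, mul_one] at h
  rw [mul_comm l x]
  linarith

lemma one_sub_add_mul_exp_le_exp {p : ℝ} (hp : p ∈ Icc (0 : ℝ) 1) (t : ℝ) :
    1 - p + p * exp t ≤ exp (p * t + t ^ 2 / 8) := by
  let B : Bool → ℝ := fun b => if b then 1 else 0
  have h_mgf : p * exp (t * (1 - p)) + (1 - p) * exp (-(t * p)) ≤ exp (t ^ 2 / 8) := by
    have h := (hasSubgaussianMGF_of_mem_Icc (μ := Ber(true, false, ⟨p, hp⟩)) (a := 0) (b := 1)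
      (measurable_of_finite B).aemeasurable (ae_of_all _ fun b => by cases b <;> simp [B])).mgf_le t
    simp [mgf, integral_bernoulliMeasure, B] at h
    exact h.trans_eq (by ring_nf)
  have h₁ : exp (p * t) * exp (t * (1 - p)) = exp t := by rw [← exp_add]; ring_nf
  have h₂ : exp (p * t) * exp (-(t * p)) = 1 := by rw [← exp_add]; ring_nf; exact exp_zero
  calc 1 - p + p * exp t
      = exp (p * t) * (p * exp (t * (1 - p)) + (1 - p) * exp (-(t * p))) := by
        linear_combination (-p) * h₁ - (1 - p) * h₂
    _ ≤ exp (p * t) * exp (t ^ 2 / 8) := by gcongr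
    _ = exp (p * t + t ^ 2 / 8) := (exp_add _ _).symm

section

variable {Ω : Type*} {mΩ : MeasurableSpace Ω} {P : Measure Ω} [IsProbabilityMeasure P]

lemma integral_mem_Icc_of_mem_Icc {Y : Ω → ℝ} (hY : Integrable Y P) {a b : ℝ}
    (hYab : ∀ᵐ ω ∂P, Y ω ∈ Icc a b) : ∫ ω, Y ω ∂P ∈ Icc a b := by
  constructor
  · simpa using integral_mono_ae (integrable_const a) hY (hYab.mono fun _ h => h.1)
  · simpa using integral_mono_ae hY (integrable_const b) (hYab.mono fun _ h => h.2)

lemma condExp_exp_mul_le_of_condExp_eq_const {m : MeasurableSpace Ω} (hm : m ≤ mΩ) {Y : Ω → ℝ}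
    (hY : AEMeasurable Y P) (hY01 : ∀ᵐ ω ∂P, Y ω ∈ Icc (0 : ℝ) 1) {p : ℝ}
    (hYp : P[Y | m] =ᵐ[P] fun _ => p) (l : ℝ) :
    P[fun ω => exp (l * Y ω) | m] ≤ᵐ[P] fun _ => exp (p * l + l ^ 2 / 8) := by
  have hY_int : Integrable Y P := .of_mem_Icc 0 1 hY hY01
  have hp : p ∈ Icc (0 : ℝ) 1 := by
    have h := integral_mem_Icc_of_mem_Icc hY_int hY01
    rwa [← integral_condExp hm, integral_congr_ae hYp, integral_const, probReal_univ,
      one_smul] at h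
  have h_chord : P[fun ω => 1 + (exp l - 1) * Y ω | m] =ᵐ[P] fun _ => 1 + (exp l - 1) * p := by
    have h_add := condExp_add (m := m) (integrable_const (1 : ℝ)) (hY_int.const_mul (exp l - 1))
    have h_mul := condExp_smul (m := m) (μ := P) (exp l - 1) Y
    filter_upwards [h_add, h_mul, hYp] with ω h₁ h₂ h₃
    rw [Pi.add_apply, condExp_const hm] at h₁
    rw [Pi.smul_apply, smul_eq_mul, h₃] at h₂
    rw [← h₂]
    exact h₁
  calc P[fun ω => exp (l * Y ω) | m]
      ≤ᵐ[P] P[fun ω => 1 + (exp l - 1) * Y ω | m] :=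
        condExp_mono (integrable_exp_mul_of_mem_Icc hY hY01)
          ((integrable_const 1).add (hY_int.const_mul _))
          (hY01.mono fun ω h => exp_mul_le_one_add_mul h l)
    _ =ᵐ[P] fun _ => 1 + (exp l - 1) * p := h_chord
    _ ≤ᵐ[P] fun _ => exp (p * l + l ^ 2 / 8) := ae_of_all _ fun _ => by
        linarith [one_sub_add_mul_exp_le_exp hp l]

lemma integral_prod_le_pow_of_condExp_le {ι : Type*} [LinearOrder ι] {m : ι → MeasurableSpace Ω}
    (hm : ∀ t, m t ≤ mΩ) {Z : ι → Ω → ℝ} (hZ : ∀ t, Measurable (Z t))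
    (hZ_adapted : ∀ s t, s < t → Measurable[m t] (Z s)) {C : ℝ} (hZC : ∀ t ω, Z t ω ∈ Icc 0 C)
    {c : ℝ} (hc : 0 ≤ c) (hZc : ∀ t, P[Z t | m t] ≤ᵐ[P] fun _ => c) (s : Finset ι) :
    ∫ ω, ∏ t ∈ s, Z t ω ∂P ≤ c ^ s.card := by
  classical
  have h_int (s : Finset ι) : Integrable (fun ω => ∏ t ∈ s, Z t ω) P :=
    .of_mem_Icc 0 (C ^ s.card) (Finset.measurable_prod _ fun t _ => hZ t).aemeasurable <|
      ae_of_all _ fun ω => ⟨Finset.prod_nonneg fun t _ => (hZC t ω).1,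
        (Finset.prod_le_prod (fun t _ => (hZC t ω).1) fun t _ => (hZC t ω).2).trans_eq
          (Finset.prod_const C)⟩
  induction s using Finset.induction_on_max with
  | empty => simp
  | insert a s hlt ih =>
    have has : a ∉ s := fun h => lt_irrefl a (hlt a h)
    set past : Ω → ℝ := fun ω => ∏ t ∈ s, Z t ω
    have h_past : StronglyMeasurable[m a] past :=
      (Finset.measurable_prod _ fun t ht => hZ_adapted t a (hlt t ht)).stronglyMeasurable
    have h_split : (fun ω => ∏ t ∈ insert a s, Z t ω) = Z a * past := by
      ext ω; exact Finset.prod_insert has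
    have h_pull : P[Z a * past | m a] =ᵐ[P] P[Z a | m a] * past :=
      condExp_mul_of_stronglyMeasurable_right h_past (h_split ▸ h_int _)
        (.of_mem_Icc 0 C (hZ a).aemeasurable (ae_of_all _ (hZC a)))
    rw [h_split, Finset.card_insert_of_notMem has, pow_succ']
    calc ∫ ω, (Z a * past) ω ∂P
        = ∫ ω, (P[Z a | m a] * past) ω ∂P := by
          rw [← integral_condExp (hm a)]; exact integral_congr_ae h_pull
      _ ≤ ∫ ω, c * past ω ∂P := by
          refine integral_mono_ae (integrable_condExp.congr h_pull) ((h_int s).const_mul c) ?_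
          filter_upwards [hZc a] with ω hω
          exact mul_le_mul_of_nonneg_right hω (Finset.prod_nonneg fun t _ => (hZC t ω).1)
      _ = c * ∫ ω, past ω ∂P := integral_const_mul c _
      _ ≤ c * c ^ s.card := mul_le_mul_of_nonneg_left ih hc

lemma mgf_sum_le_of_condExp_eq_const {ι : Type*} [LinearOrder ι] [Fintype ι]
    {m : ι → MeasurableSpace Ω} (hm : ∀ t, m t ≤ mΩ) {X : ι → Ω → ℝ} (hX : ∀ t, Measurable (X t))
    (hX_adapted : ∀ s t, s < t → Measurable[m t] (X s)) (hX01 : ∀ t ω, X t ω ∈ Icc (0 : ℝ) 1)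
    {p : ℝ} (hXp : ∀ t, P[X t | m t] =ᵐ[P] fun _ => p) (l : ℝ) :
    mgf (fun ω => ∑ t, X t ω) P l ≤ exp (p * l + l ^ 2 / 8) ^ Fintype.card ι := by
  have h := integral_prod_le_pow_of_condExp_le hm (Z := fun t ω => exp (l * X t ω))
    (fun t => by fun_prop) (fun s t hst => by fun_prop) (C := exp |l|)
    (fun t ω => ⟨(exp_pos _).le, exp_le_exp.2 <|
      (mul_le_mul_of_nonneg_right (le_abs_self l) (hX01 t ω).1).trans
        (mul_le_of_le_one_right (abs_nonneg l) (hX01 t ω).2)⟩)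
    (exp_pos _).le (fun t => condExp_exp_mul_le_of_condExp_eq_const (hm t) (hX t).aemeasurable
      (ae_of_all _ (hX01 t)) (hXp t) l) Finset.univ
  simpa [mgf, Finset.mul_sum, exp_sum] using h

end

/-- Upper-tail Chernoff–Hoeffding bound for random variables with range `[0,1]`
whose conditional mean given the past is `mu`. -/
theorem chernoff_hoeffding_upper
    {Ω : Type*} [MeasurableSpace Ω] (P : Measure Ω) [IsProbabilityMeasure P]
    (n : ℕ) (X : Fin n → Ω → ℝ) (mu : ℝ)
    (hmeas : ∀ t, Measurable (X t))
    (hrange : ∀ t ω, X t ω ∈ Set.Icc (0 : ℝ) 1)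
    (hcond : ∀ t : Fin n,
      P[X t | ⨆ (s : Fin n) (_ : s < t), MeasurableSpace.comap (X s) inferInstance]
        =ᵐ[P] fun _ => mu)
    (a : ℝ) (ha : 0 ≤ a) :
    P {ω | (n : ℝ) * mu + a ≤ ∑ t, X t ω}
      ≤ ENNReal.ofReal (Real.exp (-2 * a ^ 2 / n)) := by
  set l : ℝ := 4 * a / n
  let m : Fin n → MeasurableSpace Ω := fun t =>
    ⨆ (s : Fin n) (_ : s < t), MeasurableSpace.comap (X s) inferInstance
  have hm (t : Fin n) : m t ≤ ‹_› := iSup₂_le fun s _ => (hmeas s).comap_le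
  have h_adapted (s t : Fin n) (hst : s < t) : Measurable[m t] (X s) :=
    measurable_iff_comap_le.2 (le_iSup₂_of_le s hst le_rfl)
  have hmgf := mgf_sum_le_of_condExp_eq_const hm hmeas h_adapted hrange hcond l
  rw [Fintype.card_fin] at hmgf
  have h_int : Integrable (fun ω => exp (l * ∑ t, X t ω)) P :=
    integrable_exp_mul_of_mem_Icc (a := 0) (b := n) (by fun_prop) <| ae_of_all _ fun ω =>
      ⟨Finset.sum_nonneg fun t _ => (hrange t ω).1,
        by simpa using Finset.sum_le_card_nsmul Finset.univ _ 1 fun t _ => (hrange t ω).2⟩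
  have h_exponent : -l * (n * mu + a) + n * (mu * l + l ^ 2 / 8) = -2 * a ^ 2 / n := by
    rcases n.eq_zero_or_pos with rfl | _
    · simp [l]
    · simp only [l]; field_simp; ring
  rw [← ofReal_measureReal]
  gcongr
  calc P.real {ω | n * mu + a ≤ ∑ t, X t ω}
      ≤ exp (-l * (n * mu + a)) * mgf (fun ω => ∑ t, X t ω) P l :=
        measure_ge_le_exp_mul_mgf _ (by positivity) h_int
    _ ≤ exp (-l * (n * mu + a)) * exp (mu * l + l ^ 2 / 8) ^ n := by gcongr
    _ = exp (-2 * a ^ 2 / n) := by rw [← exp_nat_mul, ← exp_add, h_exponent]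
end

section
/- Let (Ω, F, P) be a probability space and let X_1, …, X_n be real-valued random variables on Ω with values in [0,1] such that for every 1 ≤ t ≤ n the conditional expectation of X_t given the σ-algebra generated by X_1, …, X_{t−1} equals μ almost surely. Let S_n = X_1 + … + X_n. Then for every a ≥ 0, P(S_n ≤ n·μ − a) ≤ exp(−2a²/n). -/
/-!
Chernoff's method. Convexity of `exp` on `[0, 1]` bounds `exp (s * (X_t - μ))` by an affine function
of `X_t`, so its conditional expectation given the past is at most the moment generating function of
a centred Bernoulli(μ) variable, hence at most `exp (s² / 8)` by Hoeffding's lemma. Peeling off the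
last factor with the tower property, `∑ (X_t - μ)` has a sub-Gaussian mgf with variance proxy
`n / 4`, and the Chernoff bound gives the tail `exp (-2 a² / n)`.
-/

open MeasureTheory ProbabilityTheory Real

-- The left side is the mgf at `s` of a Bernoulli(`p`) variable centred at its mean.
theorem bernoulli_mgf_le (p : ℝ) (hp0 : 0 ≤ p) (hp1 : p ≤ 1) (s : ℝ) :
    (1 - p + p * exp s) * exp (-(p * s)) ≤ exp (s ^ 2 / 8) := by
  have hq0 : 0 ≤ 1 - p := by linarith
  let ν : Measure ℝ := ENNReal.ofReal (1 - p) • .dirac 0 + ENNReal.ofReal p • .dirac 1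
  have integral_ν (f : ℝ → ℝ) : ∫ x, f x ∂ν = (1 - p) * f 0 + p * f 1 := by
    rw [integral_add_measure ((integrable_dirac (by simp)).smul_measure (by simp))
      ((integrable_dirac (by simp)).smul_measure (by simp))]
    simp [hp0, hq0]
  have : IsProbabilityMeasure ν := ⟨by simp [ν, ← ENNReal.ofReal_add hq0 hp0]⟩
  have hsupp : ∀ᵐ x ∂ν, x ∈ Set.Icc (0 : ℝ) 1 := by
    simp only [ν, ae_add_measure_iff]
    constructor <;> exact Measure.ae_smul_measure (by simp) _
  have h := (hasSubgaussianMGF_of_mem_Icc measurable_id.aemeasurable hsupp).mgf_le s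
  rw [show ν[id] = p by simpa using integral_ν id] at h
  convert h using 1
  · simp only [mgf, integral_ν, id]
    rw [add_mul, mul_assoc, ← exp_add]
    ring_nf
  · norm_num
    ring_nf

theorem exp_mul_le_one_sub_add_mul_exp {x : ℝ} (hx : x ∈ Set.Icc (0 : ℝ) 1) (s : ℝ) :
    exp (s * x) ≤ 1 - x + x * exp s := by
  simpa [mul_comm x s] using convexOn_exp.2 (Set.mem_univ 0) (Set.mem_univ s)
    (sub_nonneg.2 hx.2) hx.1 (sub_add_cancel 1 x)

theorem Finset.prod_mem_Icc_pow {ι : Type*} {S : Finset ι} {f : ι → ℝ} {C : ℝ}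
    (h : ∀ t ∈ S, f t ∈ Set.Icc 0 C) : ∏ t ∈ S, f t ∈ Set.Icc 0 (C ^ S.card) :=
  ⟨S.prod_nonneg fun t ht => (h t ht).1, (S.prod_le_prod (fun t ht => (h t ht).1)
    fun t ht => (h t ht).2).trans_eq (S.prod_const C)⟩

section

variable {Ω : Type*} {m mΩ : MeasurableSpace Ω} {P : Measure Ω}

theorem mem_Icc_of_condExp_eq_const [IsProbabilityMeasure P] (hm : m ≤ mΩ) {X : Ω → ℝ} {p : ℝ}
    (hX : Measurable X) (hrange : ∀ ω, X ω ∈ Set.Icc (0 : ℝ) 1)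
    (hcond : P[X | m] =ᵐ[P] fun _ => p) : p ∈ Set.Icc (0 : ℝ) 1 := by
  have hp : p = P[X] := by
    rw [← integral_condExp hm, integral_congr_ae hcond, integral_const, probReal_univ, one_smul]
  rw [hp]
  exact ⟨integral_nonneg fun ω => (hrange ω).1,
    (integral_mono (Integrable.of_mem_Icc 0 1 hX.aemeasurable (.of_forall hrange))
      (integrable_const 1) fun ω => (hrange ω).2).trans_eq (by simp)⟩

theorem condExp_exp_mul_sub_le [IsProbabilityMeasure P] (hm : m ≤ mΩ) {X : Ω → ℝ} {p : ℝ}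
    (hX : Measurable X) (hrange : ∀ ω, X ω ∈ Set.Icc (0 : ℝ) 1)
    (hcond : P[X | m] =ᵐ[P] fun _ => p) (s : ℝ) :
    P[fun ω => exp (s * (X ω - p)) | m] ≤ᵐ[P] fun _ => exp (s ^ 2 / 8) := by
  obtain ⟨hp0, hp1⟩ := mem_Icc_of_condExp_eq_const hm hX hrange hcond
  have hXint : Integrable X P := Integrable.of_mem_Icc 0 1 hX.aemeasurable (.of_forall hrange)
  set c := exp (-(p * s))
  let A : Ω → ℝ := (fun _ => c) + (c * (exp s - 1)) • X
  have hA : Integrable A P := (integrable_const c).add (hXint.smul _)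
  have hle : (fun ω => exp (s * (X ω - p))) ≤ A := fun ω => by
    calc exp (s * (X ω - p)) = c * exp (s * X ω) := by rw [← exp_add]; ring_nf
      _ ≤ c * (1 - X ω + X ω * exp s) := by
        gcongr; exact exp_mul_le_one_sub_add_mul_exp (hrange ω) s
      _ = A ω := by simp only [A, Pi.add_apply, Pi.smul_apply, smul_eq_mul]; ring
  have hcondA : P[A | m] =ᵐ[P] fun _ => c + c * (exp s - 1) * p := by
    filter_upwards [condExp_add (integrable_const c) (hXint.smul (c * (exp s - 1))) m,
      condExp_smul (μ := P) (c * (exp s - 1)) X m, hcond] with ω hadd hsmul hXω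
    rw [hadd, Pi.add_apply, hsmul, condExp_const hm, Pi.smul_apply, hXω, smul_eq_mul]
  have hexp : Integrable (fun ω => exp (s * (X ω - p))) P :=
    integrable_exp_mul_of_mem_Icc (a := -p) (b := 1 - p) (hX.sub_const p).aemeasurable
      (.of_forall fun ω => ⟨by linarith [(hrange ω).1], by linarith [(hrange ω).2]⟩)
  filter_upwards [condExp_mono (m := m) hexp hA (.of_forall hle), hcondA] with ω hmono hAω
  calc _ ≤ c + c * (exp s - 1) * p := hAω ▸ hmono
    _ = (1 - p + p * exp s) * exp (-(p * s)) := by ring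
    _ ≤ exp (s ^ 2 / 8) := bernoulli_mgf_le p hp0 hp1 s

theorem integral_mul_le_of_condExp_le [IsFiniteMeasure P] (hm : m ≤ mΩ) {Z W : Ω → ℝ}
    {C c : ℝ} (hZ : StronglyMeasurable[m] Z) (hZC : ∀ ω, Z ω ∈ Set.Icc 0 C)
    (hW : Integrable W P) (hWc : P[W | m] ≤ᵐ[P] fun _ => c) :
    ∫ ω, Z ω * W ω ∂P ≤ c * ∫ ω, Z ω ∂P := by
  have hZ_bdd : ∀ᵐ ω ∂P, ‖Z ω‖ ≤ C := .of_forall fun ω => by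
    rw [Real.norm_of_nonneg (hZC ω).1]; exact (hZC ω).2
  have hZ_ae : AEStronglyMeasurable Z P := (hZ.mono hm).aestronglyMeasurable
  calc ∫ ω, Z ω * W ω ∂P = ∫ ω, (P[Z * W | m]) ω ∂P := (integral_condExp hm).symm
    _ = ∫ ω, Z ω * (P[W | m]) ω ∂P :=
        integral_congr_ae (condExp_mul_of_stronglyMeasurable_left hZ (hW.bdd_mul hZ_ae hZ_bdd) hW)
    _ ≤ ∫ ω, Z ω * c ∂P := integral_mono_ae (integrable_condExp.bdd_mul hZ_ae hZ_bdd)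
        ((Integrable.of_bound hZ_ae C hZ_bdd).mul_const c)
        (by filter_upwards [hWc] with ω h using mul_le_mul_of_nonneg_left h (hZC ω).1)
    _ = c * ∫ ω, Z ω ∂P := by rw [integral_mul_const, mul_comm]

theorem integral_prod_le_pow [IsProbabilityMeasure P] {ι : Type*} [LinearOrder ι]
    {F : ι → MeasurableSpace Ω} (hF : ∀ t, F t ≤ mΩ) {W : ι → Ω → ℝ} {C c : ℝ} (hc : 0 ≤ c)
    (hW : ∀ t, Measurable (W t)) (hWC : ∀ t ω, W t ω ∈ Set.Icc 0 C)
    (hadapted : ∀ s t, s < t → Measurable[F t] (W s))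
    (hcond : ∀ t, P[W t | F t] ≤ᵐ[P] fun _ => c) (S : Finset ι) :
    ∫ ω, ∏ t ∈ S, W t ω ∂P ≤ c ^ S.card := by
  induction S using Finset.induction_on_max with
  | empty => simp
  | insert a S hlt ih =>
    have haS : a ∉ S := fun h => lt_irrefl a (hlt a h)
    have hZ : StronglyMeasurable[F a] fun ω => ∏ t ∈ S, W t ω :=
      (Finset.measurable_prod S fun t ht => hadapted t a (hlt t ht)).stronglyMeasurable
    calc ∫ ω, ∏ t ∈ insert a S, W t ω ∂P = ∫ ω, (∏ t ∈ S, W t ω) * W a ω ∂P := by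
          simp only [Finset.prod_insert haS, mul_comm]
      _ ≤ c * ∫ ω, ∏ t ∈ S, W t ω ∂P := integral_mul_le_of_condExp_le (hF a) hZ
          (fun ω => Finset.prod_mem_Icc_pow fun t _ => hWC t ω)
          (.of_mem_Icc 0 C (hW a).aemeasurable (.of_forall (hWC a))) (hcond a)
      _ ≤ c ^ (insert a S).card := by
          rw [Finset.card_insert_of_notMem haS, pow_succ']; gcongr

abbrev pastMeasurableSpace {ι β : Type*} [LT ι] [MeasurableSpace β] (X : ι → Ω → β) (t : ι) :
    MeasurableSpace Ω :=
  ⨆ (s : ι) (_ : s < t), MeasurableSpace.comap (X s) inferInstance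

theorem pastMeasurableSpace_le {ι β : Type*} [LT ι] [MeasurableSpace β] {X : ι → Ω → β}
    (hX : ∀ s, Measurable (X s)) (t : ι) : pastMeasurableSpace X t ≤ mΩ :=
  iSup₂_le fun s _ => (hX s).comap_le

theorem measurable_pastMeasurableSpace {ι β : Type*} [LT ι] [MeasurableSpace β]
    {X : ι → Ω → β} {s t : ι} (hst : s < t) : Measurable[pastMeasurableSpace X t] (X s) :=
  (comap_measurable (X s)).mono (le_iSup₂ (f := fun s (_ : s < t) =>
    MeasurableSpace.comap (X s) inferInstance) s hst) le_rfl

theorem hasSubgaussianMGF_sum_sub [IsProbabilityMeasure P] {ι : Type*} [LinearOrder ι]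
    [Fintype ι] {F : ι → MeasurableSpace Ω} (hF : ∀ t, F t ≤ mΩ) {X : ι → Ω → ℝ} {mu : ℝ}
    (hX : ∀ t, Measurable (X t)) (hrange : ∀ t ω, X t ω ∈ Set.Icc (0 : ℝ) 1)
    (hadapted : ∀ s t, s < t → Measurable[F t] (X s))
    (hcond : ∀ t, P[X t | F t] =ᵐ[P] fun _ => mu) :
    HasSubgaussianMGF (fun ω => ∑ t, (X t ω - mu)) (Fintype.card ι / 4) P := by
  have key (s : ℝ) : Integrable (fun ω => exp (s * ∑ t, (X t ω - mu))) P ∧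
      mgf (fun ω => ∑ t, (X t ω - mu)) P s ≤ exp (Fintype.card ι / 4 * s ^ 2 / 2) := by
    let W : ι → Ω → ℝ := fun t ω => exp (s * (X t ω - mu))
    have hW_prod : (fun ω => exp (s * ∑ t, (X t ω - mu))) = fun ω => ∏ t, W t ω := by
      ext ω
      rw [Finset.mul_sum, exp_sum]
    have hW_mem : ∀ t ω, W t ω ∈ Set.Icc 0 (exp (|s| * (1 + |mu|))) := fun t ω => by
      refine ⟨(exp_pos _).le, exp_le_exp.2 ((le_abs_self _).trans ?_)⟩
      rw [abs_mul]
      gcongr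
      exact (abs_sub _ _).trans (by rw [abs_of_nonneg (hrange t ω).1]; linarith [(hrange t ω).2])
    refine ⟨hW_prod ▸ .of_mem_Icc 0 _ (by fun_prop)
      (.of_forall fun ω => Finset.prod_mem_Icc_pow fun t _ => hW_mem t ω), ?_⟩
    calc mgf (fun ω => ∑ t, (X t ω - mu)) P s = ∫ ω, ∏ t, W t ω ∂P := by rw [mgf, hW_prod]
      _ ≤ exp (s ^ 2 / 8) ^ Fintype.card ι :=
        integral_prod_le_pow hF (exp_pos _).le (fun t => by fun_prop) hW_mem
          (fun r t hrt => by have := hadapted r t hrt; fun_prop)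
          (fun t => condExp_exp_mul_sub_le (hF t) (hX t) (hrange t) (hcond t) s) Finset.univ
      _ = exp (Fintype.card ι / 4 * s ^ 2 / 2) := by rw [← exp_nat_mul]; ring_nf
  exact ⟨fun s => (key s).1, fun s => by simpa using (key s).2⟩

theorem measureReal_sum_le_sub_le [IsProbabilityMeasure P] {ι : Type*} [LinearOrder ι]
    [Fintype ι] {F : ι → MeasurableSpace Ω} (hF : ∀ t, F t ≤ mΩ) {X : ι → Ω → ℝ} {mu : ℝ}
    (hX : ∀ t, Measurable (X t)) (hrange : ∀ t ω, X t ω ∈ Set.Icc (0 : ℝ) 1)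
    (hadapted : ∀ s t, s < t → Measurable[F t] (X s))
    (hcond : ∀ t, P[X t | F t] =ᵐ[P] fun _ => mu) {a : ℝ} (ha : 0 ≤ a) :
    P.real {ω | ∑ t, X t ω ≤ Fintype.card ι * mu - a}
      ≤ exp (-2 * a ^ 2 / Fintype.card ι) := by
  have h := (hasSubgaussianMGF_sum_sub hF hX hrange hadapted hcond).neg.measure_ge_le ha
  convert h using 2
  · ext ω
    simpa [Finset.sum_sub_distrib] using le_sub_comm
  · push_cast
    ring

end

/-- Lower-tail Chernoff–Hoeffding bound for random variables with range `[0,1]`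
whose conditional mean given the past is `mu`. -/
theorem chernoff_hoeffding_lower
    {Ω : Type*} [MeasurableSpace Ω] (P : Measure Ω) [IsProbabilityMeasure P]
    (n : ℕ) (X : Fin n → Ω → ℝ) (mu : ℝ)
    (hmeas : ∀ t, Measurable (X t))
    (hrange : ∀ t ω, X t ω ∈ Set.Icc (0 : ℝ) 1)
    (hcond : ∀ t : Fin n,
      P[X t | ⨆ (s : Fin n) (_ : s < t), MeasurableSpace.comap (X s) inferInstance]
        =ᵐ[P] fun _ => mu)
    (a : ℝ) (ha : 0 ≤ a) :
    P {ω | ∑ t, X t ω ≤ (n : ℝ) * mu - a}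
      ≤ ENNReal.ofReal (Real.exp (-2 * a ^ 2 / n)) := by
  rw [← ofReal_measureReal]
  gcongr
  simpa using measureReal_sum_le_sub_le (pastMeasurableSpace_le hmeas) hmeas hrange
    (fun _ _ => measurable_pastMeasurableSpace) hcond ha
end

section
/- Let d and L be integers with 1 ≤ d ≤ L, let t ≥ 1 be an integer, and for each j = 1, …, d let (X_{j,k})_{k≥1} be an i.i.d. sequence of random variables with values in [0,1] and mean θ_j (no independence across different j is assumed). Let a_1, …, a_d be strictly positive reals, let m_1, …, m_d be integers with 1 ≤ m_j ≤ t, write X̄_{j,m_j} = (1/m_j)·(X_{j,1} + … + X_{j,m_j}) and C_{t,m} = √((L+1)·ln t / m). Then P( Σ_{j=1}^d a_j·X̄_{j,m_j} ≥ Σ_{j=1}^d a_j·θ_j + Σ_{j=1}^d a_j·C_{t,m_j} ) ≤ L·t^{−2(L+1)}. -/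
/-!
If the weighted sum of the sample means reaches `∑ a_j (θ_j + C_{t,m_j})`, then, all weights
being positive, some single sample mean reaches `θ_j + C_{t,m_j}`. By Hoeffding's inequality
this has probability at most `exp (-2 m_j C_{t,m_j}²) = t^{-2(L+1)}`, and a union bound over the
`d ≤ L` coordinates gives the claim.
-/

open MeasureTheory ProbabilityTheory Real Finset

section

variable {Ω : Type*} [MeasurableSpace Ω] {P : Measure Ω} [IsProbabilityMeasure P]

/-- Hoeffding's inequality. -/
theorem measure_sampleMean_ge_le {Y : ℕ → Ω → ℝ} (hmeas : ∀ k, AEMeasurable (Y k) P)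
    (hindep : iIndepFun Y P) (hrange : ∀ k ω, Y k ω ∈ Set.Icc (0 : ℝ) 1) {θ : ℝ}
    (hmean : ∀ k, P[Y k] = θ) {m : ℕ} (hm : 0 < m) {ε : ℝ} (hε : 0 ≤ ε) :
    P {ω | θ + ε ≤ (1 / (m : ℝ)) * ∑ k ∈ range m, Y k ω}
      ≤ ENNReal.ofReal (exp (-(2 * m * ε ^ 2))) := by
  have hsubG : ∀ k, HasSubgaussianMGF (fun ω ↦ Y k ω - θ) ((‖(1 : ℝ) - 0‖₊ / 2) ^ 2) P :=
    fun k ↦ hmean k ▸ hasSubgaussianMGF_of_mem_Icc (hmeas k) (ae_of_all _ (hrange k))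
  have hcentered : iIndepFun (fun k ω ↦ Y k ω - θ) P :=
    hindep.comp (fun _ x ↦ x - θ) fun _ ↦ measurable_sub_const θ
  have hmR : (0 : ℝ) < m := Nat.cast_pos.mpr hm
  have hevent : {ω | θ + ε ≤ (1 / (m : ℝ)) * ∑ k ∈ range m, Y k ω}
      = {ω | m * ε ≤ ∑ k ∈ range m, (Y k ω - θ)} := by
    ext ω
    simp only [Set.mem_ofPred_eq, sum_sub_distrib, sum_const, card_range, nsmul_eq_mul]
    rw [one_div, le_inv_mul_iff₀ hmR]
    constructor <;> intro h <;> linarith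
  rw [hevent, ← ofReal_measureReal]
  refine ENNReal.ofReal_le_ofReal <|
    (HasSubgaussianMGF.measure_sum_range_ge_le_of_iIndepFun hcentered (fun k _ ↦ hsubG k)
      (by positivity)).trans_eq ?_
  congr 1
  norm_num
  field_simp
  norm_num

end

theorem exists_add_le_of_sum_mul_le {ι : Type*} {s : Finset ι} (hs : s.Nonempty)
    {a θ ε x : ι → ℝ} (ha : ∀ i ∈ s, 0 < a i)
    (h : ∑ i ∈ s, a i * θ i + ∑ i ∈ s, a i * ε i ≤ ∑ i ∈ s, a i * x i) :
    ∃ i ∈ s, θ i + ε i ≤ x i := by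
  rw [← sum_add_distrib] at h
  obtain ⟨i, hi, hle⟩ := exists_le_of_sum_le hs h
  exact ⟨i, hi, le_of_mul_le_mul_left (by linarith) (ha i hi)⟩

theorem exp_neg_two_mul_sq_sqrt_log_div {t m : ℝ} (ht : 1 ≤ t) (hm : 0 < m) (n : ℕ) :
    exp (-(2 * m * √(n * log t / m) ^ 2)) = (t ^ (2 * n))⁻¹ := by
  have hexponent : 2 * m * (n * log t / m) = ((2 * n : ℕ) : ℝ) * log t := by
    push_cast
    field_simp
  rw [sq_sqrt (by positivity [log_nonneg ht]), hexponent, exp_neg, exp_nat_mul,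
    exp_log (by linarith)]

theorem weighted_sample_means_upper_deviation_general
    {Ω : Type*} [MeasurableSpace Ω] (P : Measure Ω) [IsProbabilityMeasure P]
    (d L t : ℕ) (hd : 1 ≤ d) (hdL : d ≤ L) (ht : 1 ≤ t)
    (X : Fin d → ℕ → Ω → ℝ) (θ : Fin d → ℝ)
    (hmeas : ∀ j k, Measurable (X j k))
    (hindep : ∀ j, iIndepFun (X j) P)
    (hident : ∀ j k, IdentDistrib (X j k) (X j 0) P P)
    (hrange : ∀ j k ω, X j k ω ∈ Set.Icc (0 : ℝ) 1)
    (hmean : ∀ j, ∫ ω, X j 0 ω ∂P = θ j)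
    (a : Fin d → ℝ) (ha : ∀ j, 0 < a j)
    (m : Fin d → ℕ) (hm1 : ∀ j, 1 ≤ m j) :
    P {ω | ∑ j, a j * θ j
          + ∑ j, a j * Real.sqrt (((L : ℝ) + 1) * Real.log t / (m j))
        ≤ ∑ j, a j * ((1 / (m j : ℝ)) * ∑ k ∈ Finset.range (m j), X j k ω)}
      ≤ ENNReal.ofReal ((L : ℝ) * ((t : ℝ) ^ (2 * (L + 1)))⁻¹) := by
  set E : Fin d → Set Ω := fun j ↦ {ω | θ j + √(((L : ℝ) + 1) * log t / m j)
    ≤ (1 / (m j : ℝ)) * ∑ k ∈ range (m j), X j k ω}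
  have hcover : {ω | ∑ j, a j * θ j + ∑ j, a j * √(((L : ℝ) + 1) * log t / m j)
      ≤ ∑ j, a j * ((1 / (m j : ℝ)) * ∑ k ∈ range (m j), X j k ω)} ⊆ ⋃ j, E j := fun ω hω ↦ by
    obtain ⟨j, -, hj⟩ := exists_add_le_of_sum_mul_le ⟨⟨0, hd⟩, mem_univ _⟩ (fun j _ ↦ ha j) hω
    exact Set.mem_iUnion.mpr ⟨j, hj⟩
  have hE : ∀ j, P (E j) ≤ ENNReal.ofReal ((t : ℝ) ^ (2 * (L + 1)))⁻¹ := fun j ↦ by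
    have hradius := exp_neg_two_mul_sq_sqrt_log_div (Nat.one_le_cast.mpr ht)
      (Nat.cast_pos.mpr (hm1 j)) (L + 1)
    push_cast at hradius
    rw [← hradius]
    exact measure_sampleMean_ge_le (fun k ↦ (hmeas j k).aemeasurable) (hindep j) (hrange j)
      (fun k ↦ (hident j k).integral_eq.trans (hmean j)) (hm1 j) (sqrt_nonneg _)
  calc _ ≤ P (⋃ j, E j) := measure_mono hcover
    _ ≤ ∑ j, P (E j) := measure_iUnion_fintype_le P E
    _ ≤ ∑ _j : Fin d, ENNReal.ofReal ((t : ℝ) ^ (2 * (L + 1)))⁻¹ := sum_le_sum fun j _ ↦ hE j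
    _ ≤ L * ENNReal.ofReal ((t : ℝ) ^ (2 * (L + 1)))⁻¹ := by
      rw [sum_const, card_univ, Fintype.card_fin, nsmul_eq_mul]
      gcongr
    _ = _ := by rw [ENNReal.ofReal_mul (by positivity), ENNReal.ofReal_natCast]

/-- Upper-deviation bound for a positively-weighted sum of sample means of
`d ≤ L` i.i.d. `[0,1]`-valued sequences (not necessarily independent across
coordinates), with LLR confidence radii `C_{t,m} = √((L+1)·ln t / m)`. -/
theorem weighted_sample_means_upper_deviation
    {Ω : Type*} [MeasurableSpace Ω] (P : Measure Ω) [IsProbabilityMeasure P]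
    (d L t : ℕ) (hd : 1 ≤ d) (hdL : d ≤ L) (ht : 1 ≤ t)
    (X : Fin d → ℕ → Ω → ℝ) (θ : Fin d → ℝ)
    (hmeas : ∀ j k, Measurable (X j k))
    (hindep : ∀ j, iIndepFun (X j) P)
    (hident : ∀ j k, IdentDistrib (X j k) (X j 0) P P)
    (hrange : ∀ j k ω, X j k ω ∈ Set.Icc (0 : ℝ) 1)
    (hmean : ∀ j, ∫ ω, X j 0 ω ∂P = θ j)
    (a : Fin d → ℝ) (ha : ∀ j, 0 < a j)
    (m : Fin d → ℕ) (hm1 : ∀ j, 1 ≤ m j) (hmt : ∀ j, m j ≤ t) :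
    P {ω | ∑ j, a j * θ j
          + ∑ j, a j * Real.sqrt (((L : ℝ) + 1) * Real.log t / (m j))
        ≤ ∑ j, a j * ((1 / (m j : ℝ)) * ∑ k ∈ Finset.range (m j), X j k ω)}
      ≤ ENNReal.ofReal ((L : ℝ) * ((t : ℝ) ^ (2 * (L + 1)))⁻¹) :=
  weighted_sample_means_upper_deviation_general P d L t hd hdL ht X θ hmeas hindep hident hrange
    hmean a ha m hm1
end
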